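/- Let $e_1, e_2, e_3, e_4 : [r_b, L] \to \mathbb{R}$ be continuous with $e_1 < 0$ everywhere, and let $b : [r_b,L] \to (0,\infty)$ be $C^2$. Suppose $p : [r_b, L] \to \mathbb{R}$ is $C^2$, satisfies $p(r_b) = 0$, $p(L) = 0$, the boundary relation $p'(r_b) + \kappa\, p(r_b) = 0$ for some constant $\kappa$, and the nonlocal equation $e_1 p'' + e_2 p' + e_3 p + e_4(y^0)\int_{r_b}^{y^0} b(\tau) p(\tau)\, d\tau + e_5(y^0) p(r_b) = 0$ on $[r_b,L]$ for some continuous $e_5$. Then $p \equiv 0$ on $[r_b, L]$. -/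

import Mathlib

/-!
Put `P x = ∫_{r_b}^x b p`. Since `p(r_b) = 0`, the boundary relation gives `p'(r_b) = 0` and the
`e₅` term drops out; dividing by `e₁ < 0`, the vector `(p, p', P)` then solves a linear first-order
system with coefficients bounded on `[r_b, L]` and zero initial value, so it vanishes by Grönwall.
-/

open Set

section Primitive

variable {E : Type*} [NormedAddCommGroup E] [NormedSpace ℝ E] {f : ℝ → E} {a b : ℝ}

theorem ContinuousOn.hasDerivWithinAt_Ici_integral [CompleteSpace E] {t : ℝ}
    (hf : ContinuousOn f (Icc a b)) (ht : t ∈ Ico a b) :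
    HasDerivWithinAt (fun u => ∫ x in a..u, f x) (f t) (Ici t) t := by
  have htI : t ∈ Icc a b := Ico_subset_Icc_self ht
  have hnhds : Icc a b ∈ nhdsWithin t (Ioi t) := Icc_mem_nhdsGT_of_mem ht
  have hint : IntervalIntegrable f MeasureTheory.volume a t :=
    (hf.mono (uIcc_subset_Icc (left_mem_Icc.2 (htI.1.trans htI.2)) htI)).intervalIntegrable
  exact intervalIntegral.integral_hasDerivWithinAt_right hint
    ⟨_, hnhds, hf.aestronglyMeasurable measurableSet_Icc⟩ ((hf t htI).mono_of_mem_nhdsWithin hnhds)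

theorem ContinuousOn.continuousOn_primitive_Icc (hf : ContinuousOn f (Icc a b)) :
    ContinuousOn (fun x => ∫ τ in a..x, f τ) (Icc a b) := by
  rcases le_or_gt a b with hab | hab
  · rw [← uIcc_of_le hab] at hf ⊢
    exact intervalIntegral.continuousOn_primitive_interval (hf.integrableOn_compact isCompact_uIcc)
  · simp [Icc_eq_empty_of_lt hab]

end Primitive

theorem norm_companion_le {x y z c₁ c₀ k w C₁ C₀ Ck Cw : ℝ} (h₁ : ‖c₁‖ ≤ C₁) (h₀ : ‖c₀‖ ≤ C₀)
    (hk : ‖k‖ ≤ Ck) (hw : ‖w‖ ≤ Cw) :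
    ‖(y, c₁ * y + c₀ * x + k * z, w * x)‖ ≤ (1 + C₁ + C₀ + Ck + Cw) * ‖(x, y, z)‖ := by
  set N := ‖(x, y, z)‖
  have hx : ‖x‖ ≤ N := norm_fst_le (x, y, z)
  have hy : ‖y‖ ≤ N := (norm_fst_le (y, z)).trans (norm_snd_le (x, y, z))
  have hz : ‖z‖ ≤ N := (norm_snd_le (y, z)).trans (norm_snd_le (x, y, z))
  have hN : 0 ≤ N := norm_nonneg _
  have hC₁ : 0 ≤ C₁ := (norm_nonneg _).trans h₁
  have hC₀ : 0 ≤ C₀ := (norm_nonneg _).trans h₀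
  have hCk : 0 ≤ Ck := (norm_nonneg _).trans hk
  have hCw : 0 ≤ Cw := (norm_nonneg _).trans hw
  have hmid : ‖c₁ * y + c₀ * x + k * z‖ ≤ (C₁ + C₀ + Ck) * N :=
    calc ‖c₁ * y + c₀ * x + k * z‖ ≤ ‖c₁‖ * ‖y‖ + ‖c₀‖ * ‖x‖ + ‖k‖ * ‖z‖ := by
          simpa only [norm_mul] using norm_add₃_le (a := c₁ * y) (b := c₀ * x) (c := k * z)
      _ ≤ (C₁ + C₀ + Ck) * N := by rw [add_mul, add_mul]; gcongr
  have hlast : ‖w * x‖ ≤ Cw * N := by rw [norm_mul]; gcongr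
  refine norm_prod_le_iff.2 ⟨?_, norm_prod_le_iff.2 ⟨?_, ?_⟩⟩ <;> nlinarith

theorem eq_zero_of_linear_integroDifferential {a b : ℝ} {c₁ c₀ k w p p' p'' : ℝ → ℝ}
    (hc₁ : ContinuousOn c₁ (Icc a b)) (hc₀ : ContinuousOn c₀ (Icc a b))
    (hk : ContinuousOn k (Icc a b)) (hw : ContinuousOn w (Icc a b))
    (hp' : ∀ x ∈ Icc a b, HasDerivAt p (p' x) x) (hp'' : ∀ x ∈ Icc a b, HasDerivAt p' (p'' x) x)
    (heq : ∀ x ∈ Icc a b, p'' x = c₁ x * p' x + c₀ x * p x + k x * ∫ τ in a..x, w τ * p τ)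
    (hpa : p a = 0) (hp'a : p' a = 0) :
    ∀ x ∈ Icc a b, p x = 0 := by
  set P : ℝ → ℝ := fun x => ∫ τ in a..x, w τ * p τ
  have hp_cont : ContinuousOn p (Icc a b) := fun x hx => (hp' x hx).continuousAt.continuousWithinAt
  have hp'_cont : ContinuousOn p' (Icc a b) :=
    fun x hx => (hp'' x hx).continuousAt.continuousWithinAt
  have hwp : ContinuousOn (fun τ => w τ * p τ) (Icc a b) := hw.mul hp_cont
  set X : ℝ → ℝ × ℝ × ℝ := fun t => (p t, p' t, P t)
  have hX_cont : ContinuousOn X (Icc a b) :=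
    hp_cont.prodMk (hp'_cont.prodMk hwp.continuousOn_primitive_Icc)
  have hX : ∀ t ∈ Ico a b, HasDerivWithinAt X (p' t, p'' t, w t * p t) (Ici t) t := fun t ht =>
    (hp' t (Ico_subset_Icc_self ht)).hasDerivWithinAt.prodMk
      ((hp'' t (Ico_subset_Icc_self ht)).hasDerivWithinAt.prodMk
        (hwp.hasDerivWithinAt_Ici_integral ht))
  obtain ⟨C₁, hC₁⟩ := isCompact_Icc.exists_bound_of_continuousOn hc₁
  obtain ⟨C₀, hC₀⟩ := isCompact_Icc.exists_bound_of_continuousOn hc₀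
  obtain ⟨Ck, hCk⟩ := isCompact_Icc.exists_bound_of_continuousOn hk
  obtain ⟨Cw, hCw⟩ := isCompact_Icc.exists_bound_of_continuousOn hw
  have hbound : ∀ t ∈ Ico a b,
      ‖(p' t, p'' t, w t * p t)‖ ≤ (1 + C₁ + C₀ + Ck + Cw) * ‖X t‖ := fun t ht => by
    have htI := Ico_subset_Icc_self ht
    rw [heq t htI]
    exact norm_companion_le (hC₁ t htI) (hC₀ t htI) (hCk t htI) (hCw t htI)
  have hX0 : X a = 0 := by simp [X, P, hpa, hp'a]
  exact fun x hx => congrArg Prod.fst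
    (eq_zero_of_abs_deriv_le_mul_abs_self_of_eq_zero_right hX_cont hX hX0 hbound x hx)

theorem stmt_7_general (rb L : ℝ)
    (e1 e2 e3 e4 e5 b : ℝ → ℝ)
    (he1 : ContinuousOn e1 (Set.Icc rb L)) (he1neg : ∀ x ∈ Set.Icc rb L, e1 x < 0)
    (he2 : ContinuousOn e2 (Set.Icc rb L)) (he3 : ContinuousOn e3 (Set.Icc rb L))
    (he4 : ContinuousOn e4 (Set.Icc rb L))
    (hbC2 : ContDiffOn ℝ 2 b (Set.Icc rb L))
    (p p' p'' : ℝ → ℝ)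
    (hp' : ∀ x ∈ Set.Icc rb L, HasDerivAt p (p' x) x)
    (hp'' : ∀ x ∈ Set.Icc rb L, HasDerivAt p' (p'' x) x)
    (κ : ℝ)
    (hbd0 : p rb = 0)
    (hbdrel : p' rb + κ * p rb = 0)
    (heq : ∀ x ∈ Set.Icc rb L,
      e1 x * p'' x + e2 x * p' x + e3 x * p x
        + e4 x * (∫ τ in rb..x, b τ * p τ) + e5 x * p rb = 0) :
    ∀ x ∈ Set.Icc rb L, p x = 0 := by
  have he1ne : ∀ x ∈ Icc rb L, e1 x ≠ 0 := fun x hx => (he1neg x hx).ne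
  have hp'rb : p' rb = 0 := by simpa [hbd0] using hbdrel
  refine eq_zero_of_linear_integroDifferential (c₁ := fun x => -e2 x / e1 x)
    (c₀ := fun x => -e3 x / e1 x) (k := fun x => -e4 x / e1 x)
    (he2.neg.div he1 he1ne) (he3.neg.div he1 he1ne) (he4.neg.div he1 he1ne) hbC2.continuousOn
    hp' hp'' (fun x hx => ?_) hbd0 hp'rb
  have hx' := heq x hx
  rw [hbd0, mul_zero, add_zero] at hx'
  field_simp [he1ne x hx]
  linarith

/-- Uniqueness for the nonlocal two-point boundary value problem: a `C²` solution
with vanishing boundary trace at `r_b` and `L` and Venttsel-type boundary relation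
must vanish identically. -/
theorem stmt_7 (rb L : ℝ) (hrbL : rb < L)
    (e1 e2 e3 e4 e5 b : ℝ → ℝ)
    (he1 : ContinuousOn e1 (Set.Icc rb L)) (he1neg : ∀ x ∈ Set.Icc rb L, e1 x < 0)
    (he2 : ContinuousOn e2 (Set.Icc rb L)) (he3 : ContinuousOn e3 (Set.Icc rb L))
    (he4 : ContinuousOn e4 (Set.Icc rb L)) (he5 : ContinuousOn e5 (Set.Icc rb L))
    (hbC2 : ContDiffOn ℝ 2 b (Set.Icc rb L)) (hbpos : ∀ x ∈ Set.Icc rb L, 0 < b x)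
    (p p' p'' : ℝ → ℝ)
    (hp' : ∀ x ∈ Set.Icc rb L, HasDerivAt p (p' x) x)
    (hp'' : ∀ x ∈ Set.Icc rb L, HasDerivAt p' (p'' x) x)
    (hp''cont : ContinuousOn p'' (Set.Icc rb L))
    (κ : ℝ)
    (hbd0 : p rb = 0) (hbdL : p L = 0)
    (hbdrel : p' rb + κ * p rb = 0)
    (heq : ∀ x ∈ Set.Icc rb L,
      e1 x * p'' x + e2 x * p' x + e3 x * p x
        + e4 x * (∫ τ in rb..x, b τ * p τ) + e5 x * p rb = 0) :
    ∀ x ∈ Set.Icc rb L, p x = 0 :=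
  stmt_7_general rb L e1 e2 e3 e4 e5 b he1 he1neg he2 he3 he4 hbC2 p p' p'' hp' hp'' κ hbd0 hbdrel
    heq
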